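/- FIFO merge determinism: given the sender's emission sequence (a finite list of events, each a data item or a signal) and the credit-protocol rules, the receiver's maximal consumption behavior is deterministic up to the number of data items consumed per step: any two complete executions of the protocol on the same emission sequence consume the same multiset, in the same order, of events. In particular the final state has empty data and signal queues and zero credit counter. -/

import Mathlib

/-- Events: data items or signals. -/
inductive Ev
  | data (v : ℕ)
  | sig (id : ℕ)
deriving DecidableEq

/-- Channel state of the credit protocol with explicit FIFO queues and
emission/consumption logs. -/
structure CState where
  emitted : List Ev
  consumed : List Ev
  Q : List ℕ
  S : List (ℕ × ℕ)
  c : ℕ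
  k : ℕ

/-- Receiver transitions of the credit protocol. -/
inductive RecvStep : CState → CState → Prop
  | consumeData (s : CState) (v : ℕ) (Q' : List ℕ)
      (hQ : s.Q = v :: Q') (h : s.S = [] ∨ 0 < s.c) :
      RecvStep s { s with consumed := s.consumed ++ [.data v], Q := Q',
                          c := if s.S = [] then s.c else s.c - 1 }
  | transfer (s : CState) (i h : ℕ) (S' : List (ℕ × ℕ))
      (hS : s.S = (i, h) :: S') (hc : s.c = 0) (hh : 0 < h) :
      RecvStep s { s with S := (i, 0) :: S', c := h }
  | consumeSignal (s : CState) (i : ℕ) (S' : List (ℕ × ℕ))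
      (hS : s.S = (i, 0) :: S') (hc : s.c = 0) :
      RecvStep s { s with consumed := s.consumed ++ [.sig i], S := S' }

/-- All transitions: sender emissions plus receiver steps. -/
inductive CStep : CState → CState → Prop
  | emitData (s : CState) (v : ℕ) :
      CStep s { s with emitted := s.emitted ++ [.data v],
                       Q := s.Q ++ [v], k := s.k + 1 }
  | emitSignal (s : CState) (i : ℕ) :
      CStep s { s with emitted := s.emitted ++ [.sig i],
                       S := s.S ++ [(i, if s.S = [] then s.Q.length else s.k)],
                       k := 0 }
  | recv (s s' : CState) (h : RecvStep s s') : CStep s s'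

/-- Initial state. -/
def initC : CState := ⟨[], [], [], [], 0, 0⟩

/-! Reading the data queue cut at the signal counts (the first count enlarged by the credit
already granted) and inserting each signal at its cut reconstructs the events in flight. Every
transition preserves `emitted = consumed ++ in flight`, and while either queue is nonempty some
receiver transition is enabled; so in a stuck state nothing is in flight. -/

/-- The events still in flight, in emission order: the first signal is preceded by `c + h` data
items of `Q` (the credit already granted plus its own count), each later one by its own count. -/
def pending : List ℕ → List (ℕ × ℕ) → ℕ → List Ev
  | Q, [], _ => Q.map .data
  | Q, (i, h) :: S, c => (Q.take (c + h)).map .data ++ .sig i :: pending (Q.drop (c + h)) S 0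

lemma pending_append_data (Q : List ℕ) (S : List (ℕ × ℕ)) (c v : ℕ)
    (hle : c + (S.map Prod.snd).sum ≤ Q.length) :
    pending (Q ++ [v]) S c = pending Q S c ++ [.data v] := by
  induction S generalizing Q c with
  | nil => simp [pending]
  | cons p S ih =>
    obtain ⟨i, h⟩ := p
    simp only [List.map_cons, List.sum_cons] at hle
    have hhead : c + h ≤ Q.length := by omega
    rw [pending, pending, List.take_append_of_le_length hhead,
      List.drop_append_of_le_length hhead, ih _ _ (by simp; omega)]
    simp

lemma pending_append_sig (Q : List ℕ) (S : List (ℕ × ℕ)) (c i h : ℕ)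
    (hlen : Q.length = c + (S.map Prod.snd).sum + h) :
    pending Q (S ++ [(i, h)]) c = pending Q S c ++ [.sig i] := by
  induction S generalizing Q c with
  | nil =>
    simp only [List.map_nil, List.sum_nil, Nat.add_zero] at hlen
    simp [pending, List.take_of_length_le hlen.le, List.drop_eq_nil_of_le hlen.le]
  | cons p S ih =>
    obtain ⟨j, h'⟩ := p
    simp only [List.map_cons, List.sum_cons] at hlen
    rw [List.cons_append, pending, pending, ih _ _ (by simp; omega)]
    simp

lemma pending_cons_succ (v : ℕ) (Q : List ℕ) {S : List (ℕ × ℕ)} (hS : S ≠ []) (c : ℕ) :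
    pending (v :: Q) S (c + 1) = .data v :: pending Q S c := by
  obtain ⟨⟨i, h⟩, S, rfl⟩ := List.exists_cons_of_ne_nil hS
  simp [pending, Nat.add_right_comm c 1 h]

/-- `k` counts the data items emitted since the last signal; they sit at the back of `Q`. -/
structure CState.Inv (s : CState) : Prop where
  emitted_eq : s.emitted = s.consumed ++ pending s.Q s.S s.c
  length_eq : s.S ≠ [] → s.Q.length = s.c + (s.S.map Prod.snd).sum + s.k
  credit_eq_zero : s.S = [] → s.c = 0

namespace CState.Inv

variable {s : CState}

lemma credit_add_sum_le (hs : s.Inv) : s.c + (s.S.map Prod.snd).sum ≤ s.Q.length := by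
  by_cases hS : s.S = []
  · simp [hS, hs.credit_eq_zero hS]
  · have := hs.length_eq hS
    omega

lemma emitData (hs : s.Inv) (v : ℕ) :
    Inv { s with emitted := s.emitted ++ [.data v], Q := s.Q ++ [v], k := s.k + 1 } where
  emitted_eq := by
    simp only [hs.emitted_eq, pending_append_data _ _ _ _ hs.credit_add_sum_le, List.append_assoc]
  length_eq hS := by
    have := hs.length_eq hS
    simp only [List.length_append, List.length_singleton]
    omega
  credit_eq_zero := hs.credit_eq_zero

lemma emitSignal (hs : s.Inv) (i : ℕ) :
    Inv { s with emitted := s.emitted ++ [.sig i],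
                 S := s.S ++ [(i, if s.S = [] then s.Q.length else s.k)], k := 0 } where
  emitted_eq := by
    have hlen : s.Q.length = s.c + (s.S.map Prod.snd).sum +
        (if s.S = [] then s.Q.length else s.k) := by
      by_cases hS : s.S = []
      · simp [hS, hs.credit_eq_zero hS]
      · rw [if_neg hS, hs.length_eq hS]
    simp only [hs.emitted_eq, pending_append_sig _ _ _ _ _ hlen, List.append_assoc]
  length_eq _ := by
    split_ifs with hS
    · simp [hS, hs.credit_eq_zero hS]
    · simp only [List.map_append, List.sum_append, List.map_singleton, List.sum_singleton]
      have := hs.length_eq hS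
      omega
  credit_eq_zero hS := by simp at hS

lemma consumeData (hs : s.Inv) {v : ℕ} {Q : List ℕ} (hQ : s.Q = v :: Q)
    (hcredit : s.S = [] ∨ 0 < s.c) :
    Inv { s with consumed := s.consumed ++ [.data v], Q := Q,
                 c := if s.S = [] then s.c else s.c - 1 } where
  emitted_eq := by
    rw [hs.emitted_eq, hQ, List.append_assoc]
    congr 1
    by_cases hS : s.S = []
    · simp [hS, pending]
    · obtain ⟨c, hc⟩ := Nat.exists_eq_add_one.mpr (hcredit.resolve_left hS)
      simp [hS, hc, pending_cons_succ _ _ hS]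
  length_eq hS := by
    have hlen := hs.length_eq hS
    have hc := hcredit.resolve_left hS
    simp only [hQ, List.length_cons, if_neg hS] at hlen ⊢
    omega
  credit_eq_zero hS := by simp [hs.credit_eq_zero hS]

lemma transfer (hs : s.Inv) {i h : ℕ} {S : List (ℕ × ℕ)} (hS : s.S = (i, h) :: S)
    (hc : s.c = 0) : Inv { s with S := (i, 0) :: S, c := h } where
  emitted_eq := by simp [hs.emitted_eq, hS, hc, pending]
  length_eq _ := by
    have := hs.length_eq (by simp [hS])
    simp only [hS, List.map_cons, List.sum_cons] at this ⊢
    omega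
  credit_eq_zero := by simp

lemma consumeSignal (hs : s.Inv) {i : ℕ} {S : List (ℕ × ℕ)} (hS : s.S = (i, 0) :: S)
    (hc : s.c = 0) : Inv { s with consumed := s.consumed ++ [.sig i], S := S } where
  emitted_eq := by simp [hs.emitted_eq, hS, hc, pending]
  length_eq _ := by
    have := hs.length_eq (by simp [hS])
    simp only [hS, List.map_cons, List.sum_cons] at this ⊢
    omega
  credit_eq_zero _ := hc

end CState.Inv

lemma RecvStep.inv {s s' : CState} (h : RecvStep s s') (hs : s.Inv) : s'.Inv := by
  cases h with
  | consumeData v Q hQ hcredit => exact hs.consumeData hQ hcredit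
  | transfer i h S hS hc => exact hs.transfer hS hc
  | consumeSignal i S hS hc => exact hs.consumeSignal hS hc

lemma CStep.inv {s s' : CState} (h : CStep s s') (hs : s.Inv) : s'.Inv := by
  cases h with
  | emitData v => exact hs.emitData v
  | emitSignal i => exact hs.emitSignal i
  | recv s' h => exact h.inv hs

lemma CState.Inv.of_reachable {s : CState} (h : Relation.ReflTransGen CStep initC s) : s.Inv := by
  induction h with
  | refl => exact ⟨rfl, by simp [initC], fun _ => rfl⟩
  | tail _ hstep ih => exact hstep.inv ih

lemma CState.Inv.exists_recvStep {s : CState} (hs : s.Inv) (hne : s.Q ≠ [] ∨ s.S ≠ []) :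
    ∃ s', RecvStep s s' := by
  rcases hS : s.S with _ | ⟨⟨i, h⟩, S⟩
  · obtain ⟨v, Q, hQ⟩ := List.exists_cons_of_ne_nil (hne.resolve_right (by simpa using hS))
    exact ⟨_, .consumeData s v Q hQ (.inl hS)⟩
  · rcases Nat.eq_zero_or_pos s.c with hc | hc
    · rcases Nat.eq_zero_or_pos h with rfl | hh
      · exact ⟨_, .consumeSignal s i S hS hc⟩
      · exact ⟨_, .transfer s i h S hS hc hh⟩
    · have hlen := hs.credit_add_sum_le
      obtain ⟨v, Q, hQ⟩ := List.exists_cons_of_length_pos (l := s.Q) (by omega)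
      exact ⟨_, .consumeData s v Q hQ (.inr hc)⟩

/-- determinism of complete executions: in any reachable state
of the credit protocol in which the sender has emitted exactly the sequence
`e` and no receiver transition remains enabled (a complete execution), the
receiver's consumption sequence equals `e` itself — data and signals are
consumed in exactly the order emitted — and the final channel state is empty
with a zero credit counter. -/
theorem complete_execution_deterministic (e : List Ev) (s : CState)
    (hreach : Relation.ReflTransGen CStep initC s)
    (hemit : s.emitted = e)
    (hstuck : ¬ ∃ s', RecvStep s s') :
    s.consumed = e ∧ s.Q = [] ∧ s.S = [] ∧ s.c = 0 := by
  have hs := CState.Inv.of_reachable hreach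
  obtain ⟨hQ, hS⟩ : s.Q = [] ∧ s.S = [] := by
    by_contra hne
    exact hstuck (hs.exists_recvStep (not_and_or.mp hne))
  have hc := hs.credit_eq_zero hS
  refine ⟨?_, hQ, hS, hc⟩
  simpa [hQ, hS, pending, hemit] using hs.emitted_eq.symm
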